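/- Let q ∈ ℂ with q ≠ 0, and suppose q is not a real number lying in the interval (0,1]. Then the series Σ_{n≥1} (|1 − q|·Σ_{ϖ=1}^{n} |q|^{n−ϖ} + |q|^n − 1) diverges; hence complex percolation, i.e. the ℂSG measure with coupling constants t_k = ((1 − q)/q)^k, is not of bounded variation. -/

import Mathlib

open MeasureTheory Filter Finset

attribute [local instance] Classical.propDecidable

noncomputable section

/-- A relation on ℕ representing a naturally labelled past-finite causal set:
a strict partial order `r` with `r i j → i < j`. -/
def CausalRel (r : ℕ → ℕ → Prop) : Prop :=
  (∀ i, ¬ r i i) ∧ (∀ i j k, r i j → r j k → r i k) ∧ (∀ i j, r i j → i < j)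

/-- Ω, the sample space of naturally labelled past-finite causal sets. -/
def Omega : Type := {r : ℕ → ℕ → Prop // CausalRel r}

/-- An `n`-node: a strict partial order on `Fin n` compatible with the labelling. -/
def IsNode {n : ℕ} (p : Fin n → Fin n → Prop) : Prop :=
  (∀ i, ¬ p i i) ∧ (∀ i j k, p i j → p j k → p i k) ∧
    (∀ i j : Fin n, p i j → (i : ℕ) < (j : ℕ))

/-- The cylinder set of an `n`-node. -/
def Cyl {n : ℕ} (p : Fin n → Fin n → Prop) : Set Omega :=
  {r | ∀ i j : Fin n, r.1 i.1 j.1 ↔ p i j}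

/-- The Boolean set algebra 𝔜 generated by the cylinder sets (and Ω itself) under
finite unions, intersections and complements. -/
inductive InAlg : Set Omega → Prop
  | basic {n : ℕ} (hn : 1 ≤ n) (p : Fin n → Fin n → Prop) (hp : IsNode p) : InAlg (Cyl p)
  | univ : InAlg Set.univ
  | compl (s : Set Omega) : InAlg s → InAlg sᶜ
  | union (s t : Set Omega) : InAlg s → InAlg t → InAlg (s ∪ t)

/-- Finite additivity of a complex set function on the algebra 𝔜. -/
def FinitelyAdditive (μ : Set Omega → ℂ) : Prop :=
  ∀ s t : Set Omega, InAlg s → InAlg t → Disjoint s t → μ (s ∪ t) = μ s + μ t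

/-- A finite partition of Ω into pairwise disjoint members of 𝔜. -/
def IsPartition (π : Finset (Set Omega)) : Prop :=
  (∀ s ∈ π, InAlg s) ∧ ((↑π : Set (Set Omega)).Pairwise Disjoint) ∧
    ⋃₀ (↑π : Set (Set Omega)) = Set.univ

/-- Bounded variation: the sums Σᵢ |μ(αᵢ)| over finite partitions of Ω into members
of 𝔜 are uniformly bounded. -/
def BoundedVariation (μ : Set Omega → ℂ) : Prop :=
  ∃ M : ℝ, ∀ π : Finset (Set Omega), IsPartition π → ∑ s ∈ π, ‖μ s‖ ≤ M

/-- λ(a,b) = Σ_{k=b}^{a} C(a−b, k−b)·t_k. -/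
def lam (t : ℕ → ℂ) (a b : ℕ) : ℂ :=
  ∑ k ∈ Finset.Icc b a, ((a - b).choose (k - b) : ℂ) * t k

/-- The maximal elements of a finite subset `I` with respect to the relation `c`. -/
def maxIn {n : ℕ} (c : Fin n → Fin n → Prop) (I : Finset (Fin n)) : Finset (Fin n) :=
  I.filter fun i => ∀ j ∈ I, ¬ c i j

/-- The past of the element `m` in the node `p`. -/
def pastOf {n : ℕ} (p : Fin n → Fin n → Prop) (m : Fin n) : Finset (Fin n) :=
  Finset.univ.filter fun i => p i m

/-- The ℂSG amplitude of (the cylinder set of) an `n`-node: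
∏_{m=1}^{n−1} λ(ϖ_m, μ_m)/λ(m,0). -/
def amp (t : ℕ → ℂ) {n : ℕ} (p : Fin n → Fin n → Prop) : ℂ :=
  ∏ m ∈ Finset.univ.filter (fun m : Fin n => 1 ≤ (m : ℕ)),
    lam t (pastOf p m).card (maxIn p (pastOf p m)).card / lam t (m : ℕ) 0

/-- μ is the ℂSG measure associated to the coupling constants t: it is finitely
additive on 𝔜 and takes the prescribed values on cylinder sets. -/
def IsCSG (t : ℕ → ℂ) (μ : Set Omega → ℂ) : Prop :=
  FinitelyAdditive μ ∧
    ∀ (n : ℕ), 1 ≤ n → ∀ p : Fin n → Fin n → Prop, IsNode p → μ (Cyl p) = amp t p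

/-- `I` is an order ideal (downward-closed set) of the relation `c`. -/
def isIdeal {n : ℕ} (c : Fin n → Fin n → Prop) (I : Finset (Fin n)) : Prop :=
  ∀ j ∈ I, ∀ i, c i j → i ∈ I

/-- Q(c) := Σ_{I an order ideal of c} |λ(|I|, m(I))|. -/
def Qval (t : ℕ → ℂ) {n : ℕ} (c : Fin n → Fin n → Prop) : ℝ :=
  ∑ I ∈ Finset.univ.filter (fun I : Finset (Fin n) => isIdeal c I),
    ‖lam t I.card (maxIn c I).card‖

/-- ζ(c) := Q(c)/|λ(n,0)| − 1. -/
def zeta (t : ℕ → ℂ) {n : ℕ} (c : Fin n → Fin n → Prop) : ℝ :=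
  Qval t c / ‖lam t n 0‖ - 1

/-- ζ_n^a := (Σ_{k=0}^{n} C(n,k)·|t_k|)/|λ(n,0)| − 1. -/
def zetaA (t : ℕ → ℂ) (n : ℕ) : ℝ :=
  (∑ k ∈ Finset.range (n + 1), (n.choose k : ℝ) * ‖t k‖) /
    ‖lam t n 0‖ - 1

/-- ζ_n^c := (|t_0| + Σ_{ϖ=1}^{n} |λ(ϖ,1)|)/|λ(n,0)| − 1. -/
def zetaC (t : ℕ → ℂ) (n : ℕ) : ℝ :=
  (‖t 0‖ + ∑ w ∈ Finset.Icc 1 n, ‖lam t w 1‖) /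
    ‖lam t n 0‖ - 1

/-- S_n := Σ_{p an n-node} |μ(Cyl(p))|. -/
def Svar (μ : Set Omega → ℂ) (n : ℕ) : ℝ :=
  ∑ p : {p : Fin n → Fin n → Prop // IsNode p}, ‖μ (Cyl p.1)‖


/-!
For the couplings `tₖ = ((1 - q)/q)^k` one has `λ(a,b)/λ(n,0) = (1 - q)^b q^(n-a)`. An `(n+1)`-node
is an `n`-node `c` together with the order ideal `I` of `c` forming the past of the new element,
so summing `|amp|` over the extensions of `c` multiplies `|amp c|` by the ideal sum
`Σ_I |1 - q|^|max I| |q|^(n - |I|)`. Peeling off a maximal element shows that this ideal sum is at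
least `1` when `|1 - q| + |q| ≥ 1`, and then that it dominates its value on the `n`-chain, which is
`1 + ζ_n^c ≥ |1 - q| + |q|`. As `q` is off the segment `[0, 1]`, the triangle inequality
`1 ≤ |1 - q| + |q|` is strict: the `ζ_n^c` are bounded below by a positive constant, and the
variation of `μ` over the partition of `Ω` into `n`-cylinders is at least `(|1 - q| + |q|)^(n-1)`.
-/

lemma one_lt_norm_one_sub_add_norm {q : ℂ} (hq : q ≠ 0)
    (hqr : ¬ ∃ x : ℝ, 0 < x ∧ x ≤ 1 ∧ q = (x : ℂ)) : 1 < ‖1 - q‖ + ‖q‖ := by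
  refine lt_of_le_of_ne ?_ fun h => hqr ?_
  · simpa using norm_add_le (1 - q) q
  · have hbtw : Wbtw ℝ (0 : ℂ) q 1 := by
      rw [← dist_add_dist_eq_iff, dist_comm q, dist_eq_norm, dist_eq_norm]
      simpa [norm_sub_rev, add_comm] using h.symm
    obtain ⟨θ, ⟨hθ0, hθ1⟩, rfl⟩ := hbtw
    refine ⟨θ, lt_of_le_of_ne hθ0 ?_, hθ1, by simp [AffineMap.lineMap_apply]⟩
    rintro rfl
    simp at hq

/-- The ideal sum of an `n`-chain; `chainPoly ‖1 - q‖ ‖q‖ n = 1 + ζ_n^c`. -/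
def chainPoly (x r : ℝ) : ℕ → ℝ
  | 0 => 1
  | n + 1 => r * chainPoly x r n + x

section ChainPoly
variable {x r : ℝ}

lemma chainPoly_eq_sum (n : ℕ) :
    chainPoly x r n = x * ∑ w ∈ Icc 1 n, r ^ (n - w) + r ^ n := by
  induction n with
  | zero => simp [chainPoly]
  | succ n ih =>
    have hshift : ∑ w ∈ Icc 1 n, r ^ (n + 1 - w) = r * ∑ w ∈ Icc 1 n, r ^ (n - w) := by
      rw [mul_sum]
      refine sum_congr rfl fun w hw => ?_
      rw [Nat.sub_add_comm (mem_Icc.1 hw).2, pow_succ, mul_comm]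
    rw [chainPoly, ih, sum_Icc_succ_top (by omega), hshift]
    simp only [Nat.sub_self, pow_zero, pow_succ]
    ring

lemma one_le_chainPoly (hr : 0 ≤ r) (hxr : 1 ≤ x + r) (n : ℕ) : 1 ≤ chainPoly x r n := by
  induction n with
  | zero => simp [chainPoly]
  | succ n ih => rw [chainPoly]; nlinarith

lemma add_le_chainPoly_succ (hr : 0 ≤ r) (hxr : 1 ≤ x + r) (n : ℕ) :
    x + r ≤ chainPoly x r (n + 1) := by
  rw [chainPoly]; nlinarith [one_le_chainPoly hr hxr n]

end ChainPoly

lemma tendsto_sum_Ico_atTop_of_le {f : ℕ → ℝ} {δ : ℝ} (hδ : 0 < δ)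
    (hf : ∀ n, 1 ≤ n → δ ≤ f n) :
    Tendsto (fun N => ∑ n ∈ Ico 1 N, f n) atTop atTop := by
  have hlow (N : ℕ) : ((N - 1 : ℕ) : ℝ) * δ ≤ ∑ n ∈ Ico 1 N, f n := by
    simpa using card_nsmul_le_sum (Ico 1 N) f δ fun n hn => hf n (mem_Ico.1 hn).1
  refine tendsto_atTop_mono hlow (Tendsto.atTop_mul_const hδ ?_)
  exact tendsto_natCast_atTop_atTop.comp (tendsto_sub_atTop_nat 1)

lemma lam_geom (u : ℂ) {a b : ℕ} (hba : b ≤ a) :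
    lam (fun k => u ^ k) a b = u ^ b * (1 + u) ^ (a - b) := by
  rw [lam, ← Ico_add_one_right_eq_Icc, sum_Ico_eq_sum_range, add_comm 1 u, add_pow, mul_sum,
    Nat.sub_add_comm hba]
  refine sum_congr rfl fun j _ => ?_
  simp only [Nat.add_sub_cancel_left, one_pow, pow_add]
  ring

def percolationCouplings (q : ℂ) (k : ℕ) : ℂ := ((1 - q) / q) ^ k

lemma lam_div_lam_percolationCouplings {q : ℂ} (hq : q ≠ 0) {a b n : ℕ} (hba : b ≤ a)
    (han : a ≤ n) :
    lam (percolationCouplings q) a b / lam (percolationCouplings q) n 0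
      = (1 - q) ^ b * q ^ (n - a) := by
  have hinv : 1 + (1 - q) / q = q⁻¹ := by field_simp; ring
  have hlam {a b : ℕ} (h : b ≤ a) :
      lam (percolationCouplings q) a b = ((1 - q) / q) ^ b * q⁻¹ ^ (a - b) := by
    rw [← hinv]; exact lam_geom _ h
  obtain ⟨d, rfl⟩ := Nat.exists_eq_add_of_le hba
  obtain ⟨e, rfl⟩ := Nat.exists_eq_add_of_le han
  rw [hlam hba, hlam (Nat.zero_le _)]
  simp only [Nat.add_sub_cancel_left, Nat.sub_zero, pow_zero, one_mul, inv_pow, div_pow]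
  field_simp
  ring

section Ideals
variable {n : ℕ} {c : Fin n → Fin n → Prop} {D P J : Finset (Fin n)} {e : Fin n}

lemma maxIn_subset : maxIn c J ⊆ J := filter_subset _ J

lemma isIdeal_empty : isIdeal c ∅ := by simp [isIdeal]

lemma isIdeal_pastOf (hc : IsNode c) (e : Fin n) : isIdeal c (pastOf c e) := by
  simp only [isIdeal, pastOf, mem_filter, mem_univ, true_and]
  exact fun j hj i hij => hc.2.1 _ _ _ hij hj

lemma isIdeal.union (hD : isIdeal c D) (hP : isIdeal c P) : isIdeal c (D ∪ P) := by
  simp only [isIdeal, mem_union]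
  rintro j (hj | hj) i hij
  exacts [.inl (hD j hj i hij), .inr (hP j hj i hij)]

lemma isIdeal.erase (hD : isIdeal c D) (hmax : ∀ j ∈ D, ¬ c e j) : isIdeal c (D.erase e) := by
  simp only [isIdeal, mem_erase]
  exact fun j hj i hij => ⟨by rintro rfl; exact hmax j hj.2 hij, hD j hj.2 i hij⟩

lemma isIdeal.insert (hD : isIdeal c D) (he : pastOf c e ⊆ D) : isIdeal c (insert e D) := by
  simp only [isIdeal, mem_insert]
  rintro j (rfl | hj) i hij
  exacts [.inr (he (by simpa [pastOf] using hij)), .inr (hD j hj i hij)]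

lemma pastOf_subset_erase (hc : IsNode c) (hD : isIdeal c D) (he : e ∈ D) :
    pastOf c e ⊆ D.erase e := by
  intro i hi
  simp only [pastOf, mem_filter, mem_univ, true_and] at hi
  exact mem_erase.2 ⟨by rintro rfl; exact hc.1 i hi, hD e he i hi⟩

lemma exists_maximal_mem_sdiff (hc : IsNode c) (hP : isIdeal c P) (h : ¬ D ⊆ P) :
    ∃ e ∈ D, e ∉ P ∧ ∀ j ∈ D, ¬ c e j := by
  have hne : (D \ P).Nonempty := sdiff_nonempty.2 h
  obtain ⟨heD, heP⟩ := mem_sdiff.1 ((D \ P).max'_mem hne)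
  refine ⟨_, heD, heP, fun j hj hej => ?_⟩
  have hjP : j ∉ P := fun hjP => heP (hP j hjP _ hej)
  exact (hc.2.2 _ _ hej).not_ge ((D \ P).le_max' j (mem_sdiff.2 ⟨hj, hjP⟩))

end Ideals

section IdealSum
variable {n : ℕ} {c : Fin n → Fin n → Prop} {D P J : Finset (Fin n)} {e : Fin n}

def idealsBetween (c : Fin n → Fin n → Prop) (P D : Finset (Fin n)) : Finset (Finset (Fin n)) :=
  D.powerset.filter fun J => isIdeal c J ∧ P ⊆ J

lemma mem_idealsBetween :
    J ∈ idealsBetween c P D ↔ isIdeal c J ∧ P ⊆ J ∧ J ⊆ D := by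
  simp only [idealsBetween, mem_filter, mem_powerset]
  tauto

def idealSum (x r : ℝ) (c : Fin n → Fin n → Prop) (D P : Finset (Fin n)) : ℝ :=
  ∑ J ∈ idealsBetween c P D, x ^ #(maxIn c J \ P) * r ^ (#D - #J)

variable (x r : ℝ)

lemma idealSum_self (hP : isIdeal c P) : idealSum x r c P P = 1 := by
  have hsingle : idealsBetween c P P = {P} := by
    ext J
    simp only [mem_idealsBetween, mem_singleton]
    exact ⟨fun h => h.2.2.antisymm h.2.1, by rintro rfl; exact ⟨hP, subset_rfl, subset_rfl⟩⟩
  have hmax : maxIn c P \ P = ∅ := by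
    rw [Finset.sdiff_eq_empty_iff_subset]
    exact maxIn_subset
  simp [idealSum, hsingle, hmax]

lemma maxIn_sdiff_eq_insert (heJ : e ∈ J) (hmax : ∀ j ∈ J, ¬ c e j) (heP : e ∉ P) :
    maxIn c J \ P = insert e (maxIn c (J.erase e) \ (P ∪ pastOf c e)) := by
  ext i
  simp only [maxIn, pastOf, Finset.mem_sdiff, mem_insert, mem_filter, mem_erase, mem_union,
    mem_univ, true_and, not_or]
  constructor
  · rintro ⟨⟨hiJ, himax⟩, hiP⟩
    by_cases hie : i = e
    · exact .inl hie
    · exact .inr ⟨⟨⟨hie, hiJ⟩, fun j hj => himax j hj.2⟩, hiP, himax e heJ⟩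
  · rintro (rfl | ⟨⟨⟨-, hiJ⟩, himax⟩, hiP, hie⟩)
    · exact ⟨⟨heJ, hmax⟩, heP⟩
    · refine ⟨⟨hiJ, fun j hj => ?_⟩, hiP⟩
      by_cases hje : j = e
      · exact hje ▸ hie
      · exact himax j ⟨hje, hj⟩

lemma sum_idealsBetween_not_mem (heD : e ∈ D) :
    ∑ J ∈ (idealsBetween c P D).filter (e ∉ ·), x ^ #(maxIn c J \ P) * r ^ (#D - #J)
      = r * idealSum x r c (D.erase e) P := by
  have hfilter : (idealsBetween c P D).filter (e ∉ ·) = idealsBetween c P (D.erase e) := by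
    ext J
    simp only [mem_filter, mem_idealsBetween, subset_erase]
    tauto
  rw [hfilter, idealSum, mul_sum]
  refine sum_congr rfl fun J hJ => ?_
  have hJD := card_le_card (mem_idealsBetween.1 hJ).2.2
  have hD := card_pos.2 ⟨e, heD⟩
  rw [card_erase_of_mem heD] at hJD ⊢
  rw [show #D - #J = #D - 1 - #J + 1 by omega, pow_succ]
  ring

lemma sum_idealsBetween_mem (hc : IsNode c) (heD : e ∈ D) (heP : e ∉ P)
    (hmax : ∀ j ∈ D, ¬ c e j) :
    ∑ J ∈ (idealsBetween c P D).filter (e ∈ ·), x ^ #(maxIn c J \ P) * r ^ (#D - #J)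
      = x * idealSum x r c (D.erase e) (P ∪ pastOf c e) := by
  rw [idealSum, mul_sum]
  refine sum_nbij' (·.erase e) (insert e ·) (fun J hJ => ?_) (fun J hJ => ?_)
    (fun J hJ => ?_) (fun J hJ => ?_) (fun J hJ => ?_)
  · simp only [mem_filter, mem_idealsBetween] at hJ
    obtain ⟨⟨hJ, hPJ, hJD⟩, heJ⟩ := hJ
    refine mem_idealsBetween.2 ⟨hJ.erase fun j hj => hmax j (hJD hj), ?_, erase_subset_erase e hJD⟩
    refine union_subset (fun i hi => mem_erase.2 ⟨?_, hPJ hi⟩) ?_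
    · rintro rfl; exact heP hi
    · exact pastOf_subset_erase hc hJ heJ
  · obtain ⟨hJ, hPJ, hJD⟩ := mem_idealsBetween.1 hJ
    simp only [mem_filter, mem_idealsBetween, mem_insert_self, and_true]
    refine ⟨hJ.insert (subset_union_right.trans hPJ), subset_union_left.trans hPJ |>.trans
      (subset_insert e J), insert_subset heD (hJD.trans (erase_subset e D))⟩
  · exact insert_erase (mem_filter.1 hJ).2
  · exact erase_insert fun he => (mem_erase.1 ((mem_idealsBetween.1 hJ).2.2 he)).1 rfl
  · obtain ⟨⟨-, -, hJD⟩, heJ⟩ := mem_filter.1 hJ |>.imp_left mem_idealsBetween.1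
    have hJ := card_pos.2 ⟨e, heJ⟩
    have hJD' := card_le_card hJD
    rw [maxIn_sdiff_eq_insert heJ (fun j hj => hmax j (hJD hj)) heP,
      card_insert_of_notMem (by simp [maxIn]), card_erase_of_mem heD, card_erase_of_mem heJ,
      show #D - 1 - (#J - 1) = #D - #J by omega, pow_succ]
    ring

lemma idealSum_eq_of_maximal (hc : IsNode c) (heD : e ∈ D) (heP : e ∉ P)
    (hmax : ∀ j ∈ D, ¬ c e j) :
    idealSum x r c D P
      = r * idealSum x r c (D.erase e) P + x * idealSum x r c (D.erase e) (P ∪ pastOf c e) := by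
  rw [idealSum, ← sum_filter_not_add_sum_filter _ (e ∈ ·), sum_idealsBetween_not_mem x r heD,
    sum_idealsBetween_mem x r hc heD heP hmax]

end IdealSum

section IdealSumBounds
variable {n : ℕ} {c : Fin n → Fin n → Prop} {x r : ℝ}

lemma one_le_idealSum (hx : 0 ≤ x) (hr : 0 ≤ r) (hxr : 1 ≤ x + r) (hc : IsNode c)
    {D P : Finset (Fin n)} (hD : isIdeal c D) (hP : isIdeal c P) (hPD : P ⊆ D) :
    1 ≤ idealSum x r c D P := by
  induction D using Finset.strongInduction generalizing P with
  | H D ih =>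
  by_cases hDP : D ⊆ P
  · rw [hDP.antisymm hPD, idealSum_self x r hP]
  · obtain ⟨e, heD, heP, hmax⟩ := exists_maximal_mem_sdiff hc hP hDP
    have h₁ := ih _ (erase_ssubset heD) (hD.erase hmax) hP (subset_erase.2 ⟨hPD, heP⟩)
    have h₂ := ih _ (erase_ssubset heD) (hD.erase hmax) (hP.union (isIdeal_pastOf hc e))
      (union_subset (subset_erase.2 ⟨hPD, heP⟩) (pastOf_subset_erase hc hD heD))
    rw [idealSum_eq_of_maximal x r hc heD heP hmax]
    nlinarith

lemma chainPoly_card_le_idealSum (hx : 0 ≤ x) (hr : 0 ≤ r) (hxr : 1 ≤ x + r) (hc : IsNode c)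
    {D : Finset (Fin n)} (hD : isIdeal c D) : chainPoly x r #D ≤ idealSum x r c D ∅ := by
  induction D using Finset.strongInduction with
  | H D ih =>
  by_cases hD₀ : D ⊆ ∅
  · rw [subset_empty.1 hD₀, idealSum_self x r isIdeal_empty]
    simp [chainPoly]
  · obtain ⟨e, heD, -, hmax⟩ := exists_maximal_mem_sdiff hc isIdeal_empty hD₀
    have h₁ := ih _ (erase_ssubset heD) (hD.erase hmax)
    have h₂ := one_le_idealSum hx hr hxr hc (hD.erase hmax) (isIdeal_pastOf hc e)
      (pastOf_subset_erase hc hD heD)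
    rw [idealSum_eq_of_maximal x r hc heD (notMem_empty e) hmax, empty_union,
      ← card_erase_add_one heD, chainPoly]
    nlinarith

end IdealSumBounds

section Extension
variable {n : ℕ}

def restrictNode (p : Fin (n + 1) → Fin (n + 1) → Prop) : Fin n → Fin n → Prop :=
  fun i j => p i.castSucc j.castSucc

def idealOf (p : Fin (n + 1) → Fin (n + 1) → Prop) : Finset (Fin n) :=
  univ.filter fun i => p i.castSucc (Fin.last n)

def extendNode (c : Fin n → Fin n → Prop) (I : Finset (Fin n)) :
    Fin (n + 1) → Fin (n + 1) → Prop :=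
  Fin.lastCases (fun _ => False) fun i => Fin.lastCases (i ∈ I) fun j => c i j

variable {c : Fin n → Fin n → Prop} {I : Finset (Fin n)} {p : Fin (n + 1) → Fin (n + 1) → Prop}

@[simp] lemma extendNode_last (j : Fin (n + 1)) : ¬ extendNode c I (Fin.last n) j := by
  simp [extendNode]

@[simp] lemma extendNode_castSucc_last (i : Fin n) :
    extendNode c I i.castSucc (Fin.last n) ↔ i ∈ I := by
  simp [extendNode]

@[simp] lemma extendNode_castSucc_castSucc (i j : Fin n) :
    extendNode c I i.castSucc j.castSucc ↔ c i j := by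
  simp [extendNode]

lemma isNode_extendNode (hc : IsNode c) (hI : isIdeal c I) : IsNode (extendNode c I) := by
  refine ⟨fun i => ?_, fun i j k => ?_, fun i j => ?_⟩
  · cases i using Fin.lastCases <;> simp [hc.1]
  · cases i using Fin.lastCases <;> cases j using Fin.lastCases <;>
      cases k using Fin.lastCases <;> simp
    · exact fun hij hj => hI _ hj _ hij
    · exact hc.2.1 _ _ _
  · cases i using Fin.lastCases <;> cases j using Fin.lastCases <;> simp
    exact hc.2.2 _ _

lemma isNode_restrictNode (hp : IsNode p) : IsNode (restrictNode p) :=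
  ⟨fun i => hp.1 _, fun _ _ _ => hp.2.1 _ _ _, fun _ _ hij => by simpa using hp.2.2 _ _ hij⟩

lemma isIdeal_idealOf (hp : IsNode p) : isIdeal (restrictNode p) (idealOf p) := by
  simp only [isIdeal, idealOf, restrictNode, mem_filter, mem_univ, true_and]
  exact fun j hj i hij => hp.2.1 _ _ _ hij hj

lemma restrictNode_extendNode : restrictNode (extendNode c I) = c := by
  funext i j
  simp [restrictNode]

lemma idealOf_extendNode : idealOf (extendNode c I) = I := by
  ext i
  simp [idealOf]

lemma extendNode_restrictNode (hp : IsNode p) : extendNode (restrictNode p) (idealOf p) = p := by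
  funext i j
  cases i using Fin.lastCases <;> cases j using Fin.lastCases <;>
    simp [restrictNode, idealOf]
  all_goals exact fun h => (hp.2.2 _ _ h).not_ge (Fin.le_last _)

lemma pastOf_extendNode_castSucc (m : Fin n) :
    pastOf (extendNode c I) m.castSucc = (pastOf c m).map Fin.castSuccEmb := by
  ext i
  cases i using Fin.lastCases <;> simp [pastOf]

lemma pastOf_extendNode_last : pastOf (extendNode c I) (Fin.last n) = I.map Fin.castSuccEmb := by
  ext i
  cases i using Fin.lastCases <;> simp [pastOf]

lemma maxIn_extendNode_map (S : Finset (Fin n)) :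
    maxIn (extendNode c I) (S.map Fin.castSuccEmb) = (maxIn c S).map Fin.castSuccEmb := by
  ext i
  cases i using Fin.lastCases <;> simp [maxIn]

lemma amp_extendNode (t : ℕ → ℂ) (hn : 1 ≤ n) :
    amp t (extendNode c I) = amp t c * (lam t #I #(maxIn c I) / lam t n 0) := by
  simp only [amp, prod_filter, Fin.prod_univ_castSucc, Fin.val_castSucc, Fin.val_last, if_pos hn,
    pastOf_extendNode_castSucc, pastOf_extendNode_last, maxIn_extendNode_map, card_map]

end Extension

section NodeVariation
variable {n : ℕ}

def nodes (n : ℕ) : Finset (Fin n → Fin n → Prop) := univ.filter IsNode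

def nodeVariation (t : ℕ → ℂ) (n : ℕ) : ℝ := ∑ p ∈ nodes n, ‖amp t p‖

lemma nodeVariation_succ (t : ℕ → ℂ) (hn : 1 ≤ n) :
    nodeVariation t (n + 1) = ∑ c ∈ nodes n, ∑ I ∈ idealsBetween c ∅ univ,
      ‖amp t c‖ * ‖lam t #I #(maxIn c I) / lam t n 0‖ := by
  rw [sum_sigma', nodeVariation]
  refine (sum_nbij' (fun s => extendNode s.1 s.2) (fun p => ⟨restrictNode p, idealOf p⟩)
    (fun s hs => ?_) (fun p hp => ?_) (fun s _ => ?_) (fun p hp => ?_) (fun s _ => ?_)).symm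
  · simp only [nodes, mem_sigma, mem_filter, mem_univ, true_and, mem_idealsBetween] at hs ⊢
    exact isNode_extendNode hs.1 hs.2.1
  · simp only [nodes, mem_sigma, mem_filter, mem_univ, true_and, mem_idealsBetween] at hp ⊢
    exact ⟨isNode_restrictNode hp, isIdeal_idealOf hp, empty_subset _, subset_univ _⟩
  · exact Sigma.ext restrictNode_extendNode (heq_of_eq idealOf_extendNode)
  · exact extendNode_restrictNode (mem_filter.1 hp).2
  · rw [amp_extendNode t hn, norm_mul]

lemma norm_lam_div_lam_percolationCouplings {q : ℂ} (hq : q ≠ 0) {c : Fin n → Fin n → Prop}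
    {I : Finset (Fin n)} :
    ‖lam (percolationCouplings q) #I #(maxIn c I) / lam (percolationCouplings q) n 0‖
      = ‖1 - q‖ ^ #(maxIn c I \ ∅) * ‖q‖ ^ (#(univ : Finset (Fin n)) - #I) := by
  rw [lam_div_lam_percolationCouplings hq (card_le_card maxIn_subset)
    ((card_le_univ I).trans_eq (Fintype.card_fin n))]
  simp

lemma nodeVariation_succ_percolationCouplings {q : ℂ} (hq : q ≠ 0) (hn : 1 ≤ n) :
    nodeVariation (percolationCouplings q) (n + 1)
      = ∑ c ∈ nodes n, ‖amp (percolationCouplings q) c‖ * idealSum ‖1 - q‖ ‖q‖ c univ ∅ := by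
  simp only [nodeVariation_succ _ hn, norm_lam_div_lam_percolationCouplings hq, idealSum, mul_sum]

lemma one_le_nodeVariation_one (t : ℕ → ℂ) : 1 ≤ nodeVariation t 1 := by
  have hnode : IsNode (fun _ _ : Fin 1 => False) :=
    ⟨fun _ => id, fun _ _ _ h => h.elim, fun _ _ h => h.elim⟩
  have hamp : amp t (fun _ _ : Fin 1 => False) = 1 :=
    prod_eq_one fun m hm => absurd (mem_filter.1 hm).2 (by omega)
  calc (1 : ℝ) = ‖amp t (fun _ _ : Fin 1 => False)‖ := by simp [hamp]
    _ ≤ nodeVariation t 1 :=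
      single_le_sum (f := fun p => ‖amp t p‖) (fun _ _ => norm_nonneg _)
        (mem_filter.2 ⟨mem_univ _, hnode⟩)

lemma pow_le_nodeVariation_percolationCouplings {q : ℂ} (hq : q ≠ 0) (hs : 1 ≤ ‖1 - q‖ + ‖q‖)
    (n : ℕ) :
    (‖1 - q‖ + ‖q‖) ^ n ≤ nodeVariation (percolationCouplings q) (n + 1) := by
  induction n with
  | zero => simpa using one_le_nodeVariation_one _
  | succ n ih =>
    have hchain (c) (hc : c ∈ nodes (n + 1)) : ‖1 - q‖ + ‖q‖ ≤ idealSum ‖1 - q‖ ‖q‖ c univ ∅ := by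
      refine (add_le_chainPoly_succ (norm_nonneg q) hs n).trans ?_
      simpa using chainPoly_card_le_idealSum (norm_nonneg _) (norm_nonneg q) hs
        (mem_filter.1 hc).2 (D := univ) fun _ _ _ _ => mem_univ _
    calc (‖1 - q‖ + ‖q‖) ^ (n + 1)
        ≤ (‖1 - q‖ + ‖q‖) * nodeVariation (percolationCouplings q) (n + 1) := by
          rw [pow_succ']; gcongr
      _ = ∑ c ∈ nodes (n + 1), ‖amp (percolationCouplings q) c‖ * (‖1 - q‖ + ‖q‖) := by
          rw [nodeVariation, mul_sum]; simp only [mul_comm]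
      _ ≤ _ := by
          rw [nodeVariation_succ_percolationCouplings hq (by omega)]
          exact sum_le_sum fun c hc => mul_le_mul_of_nonneg_left (hchain c hc) (norm_nonneg _)

end NodeVariation

section Cylinders
variable {n : ℕ} {p p' : Fin n → Fin n → Prop}

lemma eq_of_mem_cyl {ω : Omega} (h : ω ∈ Cyl p) (h' : ω ∈ Cyl p') : p = p' :=
  funext fun i => funext fun j => propext ((h i j).symm.trans (h' i j))

lemma cyl_nonempty (hp : IsNode p) : (Cyl p).Nonempty := by
  refine ⟨⟨fun i j => ∃ (hi : i < n) (hj : j < n), p ⟨i, hi⟩ ⟨j, hj⟩, ?_, ?_, ?_⟩, ?_⟩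
  · exact fun i ⟨_, _, h⟩ => hp.1 _ h
  · exact fun i j k ⟨hi, _, hij⟩ ⟨_, hk, hjk⟩ => ⟨hi, hk, hp.2.1 _ _ _ hij hjk⟩
  · exact fun i j ⟨_, _, h⟩ => hp.2.2 _ _ h
  · exact fun i j => ⟨fun ⟨_, _, h⟩ => h, fun h => ⟨i.isLt, j.isLt, h⟩⟩

lemma isNode_restrict (ω : Omega) (n : ℕ) : IsNode fun i j : Fin n => ω.1 i j :=
  ⟨fun _ => ω.2.1 _, fun _ _ _ => ω.2.2.1 _ _ _, fun _ _ => ω.2.2.2 _ _⟩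

lemma isPartition_image_cyl (hn : 1 ≤ n) : IsPartition ((nodes n).image Cyl) := by
  simp only [IsPartition, nodes, coe_image, coe_filter, mem_image, mem_filter, mem_univ, true_and,
    forall_exists_index, and_imp, forall_apply_eq_imp_iff₂]
  refine ⟨fun p hp => InAlg.basic hn p hp, ?_, ?_⟩
  · rintro _ ⟨p, -, rfl⟩ _ ⟨p', -, rfl⟩ hne
    exact Set.disjoint_left.2 fun ω h h' => hne (congrArg Cyl (eq_of_mem_cyl h h'))
  · exact Set.eq_univ_of_forall fun ω =>
      ⟨_, ⟨_, isNode_restrict ω n, rfl⟩, fun _ _ => Iff.rfl⟩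

lemma sum_norm_image_cyl {t : ℕ → ℂ} {μ : Set Omega → ℂ} (hμ : IsCSG t μ) (hn : 1 ≤ n) :
    ∑ s ∈ (nodes n).image Cyl, ‖μ s‖ = nodeVariation t n := by
  rw [sum_image fun p hp p' _ h => ?_]
  · exact sum_congr rfl fun p hp => by rw [hμ.2 n hn p (mem_filter.1 hp).2]
  · obtain ⟨ω, hω⟩ := cyl_nonempty (mem_filter.1 hp).2
    exact eq_of_mem_cyl hω (h ▸ hω)

end Cylinders

/-- for q ≠ 0 not a real number in (0,1], the series
Σ_{n≥1} (|1−q|·Σ_{ϖ=1}^{n} |q|^{n−ϖ} + |q|^n − 1) diverges; hence complex percolation,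
the ℂSG measure with couplings t_k = ((1−q)/q)^k, is not of bounded variation. -/
theorem statement_16 (q : ℂ) (hq : q ≠ 0)
    (hqr : ¬ ∃ x : ℝ, 0 < x ∧ x ≤ 1 ∧ q = (x : ℂ))
    (t : ℕ → ℂ) (ht : ∀ k : ℕ, t k = ((1 - q) / q) ^ k) :
    ¬ (∃ L : ℝ, Filter.Tendsto (fun N : ℕ => ∑ n ∈ Finset.Ico 1 N,
        (‖1 - q‖ * (∑ w ∈ Finset.Icc 1 n, ‖q‖ ^ (n - w)) +
          ‖q‖ ^ n - 1)) Filter.atTop (nhds L)) ∧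
    (∀ μ : Set Omega → ℂ, IsCSG t μ → ¬ BoundedVariation μ) := by
  have hs := one_lt_norm_one_sub_add_norm hq hqr
  obtain rfl : t = percolationCouplings q := funext ht
  refine ⟨fun ⟨L, hL⟩ => ?_, fun μ hμ ⟨M, hM⟩ => ?_⟩
  · refine not_tendsto_nhds_of_tendsto_atTop (tendsto_sum_Ico_atTop_of_le (sub_pos.2 hs)
      fun n hn => ?_) L hL
    obtain ⟨m, rfl⟩ := Nat.exists_eq_add_of_le' hn
    rw [← chainPoly_eq_sum]
    linarith [add_le_chainPoly_succ (norm_nonneg q) hs.le m]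
  · obtain ⟨k, hk⟩ := pow_unbounded_of_one_lt M hs
    have hbound := hM _ (isPartition_image_cyl k.succ_pos)
    rw [sum_norm_image_cyl hμ k.succ_pos] at hbound
    linarith [pow_le_nodeVariation_percolationCouplings hq hs.le k]

end
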